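/- arXiv:1902.05282 — 3 statements merged into one kernel-verified Lean document; each statement's English description precedes it below -/
import Mathlib

section
/- Let λ : [0, ∞) → (0, ∞) be continuously differentiable, σ : [0, ∞) → (0, ∞) be twice continuously differentiable, and μ : [0, ∞) → ℝ be continuous, and fix α₀ > 0 and β₀ ∈ ℝ. Then there exist ε > 0 and continuously differentiable functions α, β, γ on [0, ε) with α(t) > 0, γ′(t) > 0, α(0) = α₀, β(0) = β₀, γ(0) = 0, satisfying for all t ∈ [0, ε): (i) σ(γ(t)) · α(t) · √(γ′(t)) = 1; (ii) λ(γ(t)) · γ′(t) − α′(t)/α(t) = 1; (iii) β′(t) + β(t) − α(t) · μ(γ(t)) · γ′(t) = 0. Moreover, this solution is unique: any two triples of continuously differentiable functions satisfying (i)–(iii) with these initial conditions agree on the intersection of their domains. -/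
/-!
Solving (i) for `γ'` and then (ii) for `α'` turns (i)–(ii) into the autonomous planar ODE
`γ' = (σ(γ) α)⁻²`, `α' = λ(γ) / (σ(γ)² α) - α`, whose right-hand side is `C¹` wherever `σ(γ) > 0`
and `α > 0` once `λ` and `σ` are extended to `C¹` functions on `ℝ`. Picard–Lindelöf gives a local
solution; since `γ' > 0`, every solution stays in the convex region `γ ≥ 0, α > 0`, where the field
is locally Lipschitz, so solutions are unique. Given `(γ, α)`, (iii) is the linear equation
`β' = α μ(γ) γ' - β`, solved by variation of constants and unique because its right-hand side is
`1`-Lipschitz in `β`.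
-/

open Set

/-- The transformation functions `α, β, γ` (with derivative functions `α', β', γ'`)
solve the ODE system of Definition 3.3 of the paper on `[0, ε)` with initial data
`α(0) = α₀, β(0) = β₀, γ(0) = 0`, in the continuously differentiable sense. -/
def SolvesOUSystem (lam sig mu : ℝ → ℝ) (α₀ β₀ ε : ℝ)
    (α β γ α' β' γ' : ℝ → ℝ) : Prop :=
  (∀ t ∈ Set.Ico (0 : ℝ) ε, HasDerivWithinAt α (α' t) (Set.Ico (0 : ℝ) ε) t) ∧
  (∀ t ∈ Set.Ico (0 : ℝ) ε, HasDerivWithinAt β (β' t) (Set.Ico (0 : ℝ) ε) t) ∧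
  (∀ t ∈ Set.Ico (0 : ℝ) ε, HasDerivWithinAt γ (γ' t) (Set.Ico (0 : ℝ) ε) t) ∧
  ContinuousOn α' (Set.Ico (0 : ℝ) ε) ∧
  ContinuousOn β' (Set.Ico (0 : ℝ) ε) ∧
  ContinuousOn γ' (Set.Ico (0 : ℝ) ε) ∧
  (∀ t ∈ Set.Ico (0 : ℝ) ε, 0 < α t) ∧
  (∀ t ∈ Set.Ico (0 : ℝ) ε, 0 < γ' t) ∧
  α 0 = α₀ ∧ β 0 = β₀ ∧ γ 0 = 0 ∧
  (∀ t ∈ Set.Ico (0 : ℝ) ε, sig (γ t) * α t * Real.sqrt (γ' t) = 1) ∧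
  (∀ t ∈ Set.Ico (0 : ℝ) ε, lam (γ t) * γ' t - α' t / α t = 1) ∧
  (∀ t ∈ Set.Ico (0 : ℝ) ε, β' t + β t - α t * mu (γ t) * γ' t = 0)

open scoped NNReal

section General

variable {E : Type*} [NormedAddCommGroup E] [NormedSpace ℝ E]

theorem ContDiffOn.exists_contDiff_eqOn_Ici [CompleteSpace E] {f : ℝ → E} {a : ℝ}
    (hf : ContDiffOn ℝ 1 f (Ici a)) : ∃ F : ℝ → E, ContDiff ℝ 1 F ∧ EqOn F f (Ici a) := by
  set D : ℝ → E := fun x => derivWithin f (Ici a) (max x a)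
  have hD : Continuous D :=
    (hf.continuousOn_derivWithin (uniqueDiffOn_Ici a) le_rfl).comp_continuous
      (continuous_id.max continuous_const) fun x => le_max_right x a
  have hF : ∀ x, HasDerivAt (fun x => f a + ∫ s in a..x, D s) (D x) x := fun x =>
    (hD.integral_hasStrictDerivAt a x).hasDerivAt.const_add (f a)
  refine ⟨_, contDiff_one_iff_deriv.2 ⟨fun x => (hF x).differentiableAt, ?_⟩, fun x hx => ?_⟩
  · rwa [funext fun x => (hF x).deriv]
  have hf' : ∀ t ∈ Ioo a x, HasDerivAt f (D t) t := fun t ht => by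
    simpa only [D, max_eq_left ht.1.le] using
      ((hf.differentiableOn one_ne_zero t ht.1.le).hasDerivWithinAt).hasDerivAt
        (Ici_mem_nhds ht.1)
  rw [intervalIntegral.integral_eq_sub_of_hasDerivAt_of_le hx
    (hf.continuousOn.mono Icc_subset_Ici_self) hf' (hD.intervalIntegrable a x), add_sub_cancel]

theorem ContDiffOn.exists_lipschitzOnWith_of_convex_subset {F : Type*} [NormedAddCommGroup F]
    [NormedSpace ℝ F] {v : E → F} {U K : Set E} (hU : IsOpen U) (hv : ContDiffOn ℝ 1 v U)
    (hK : IsCompact K) (hKU : K ⊆ U) :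
    ∃ M : ℝ≥0, ∀ s ⊆ K, Convex ℝ s → LipschitzOnWith M v s := by
  obtain ⟨M, hM⟩ :=
    hK.exists_bound_of_continuousOn ((hv.continuousOn_fderiv_of_isOpen hU le_rfl).mono hKU)
  refine ⟨M.toNNReal, fun s hsK hs => Convex.lipschitzOnWith_of_nnnorm_fderiv_le (𝕜 := ℝ)
    (fun x hx => ?_) (fun x hx => ?_) hs⟩
  · exact (hv.differentiableOn one_ne_zero x (hKU (hsK hx))).differentiableAt
      (hU.mem_nhds (hKU (hsK hx)))
  · rw [← NNReal.coe_le_coe, coe_nnnorm]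
    exact (hM x (hsK hx)).trans (Real.le_coe_toNNReal M)

theorem ODE_solution_unique_of_mem_Ico {v : ℝ → E → E} {s : ℝ → Set E} {f g : ℝ → E} {a b : ℝ}
    (hv : ∀ T ∈ Ico a b, ∃ K : ℝ≥0, ∀ t ∈ Ico a T, LipschitzOnWith K (v t) (s t))
    (hf : ∀ t ∈ Ico a b, HasDerivWithinAt f (v t (f t)) (Ico a b) t)
    (hfs : ∀ t ∈ Ico a b, f t ∈ s t)
    (hg : ∀ t ∈ Ico a b, HasDerivWithinAt g (v t (g t)) (Ico a b) t)
    (hgs : ∀ t ∈ Ico a b, g t ∈ s t)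
    (ha : f a = g a) :
    EqOn f g (Ico a b) := by
  intro T hT
  obtain ⟨K, hK⟩ := hv T hT
  have hsub : Icc a T ⊆ Ico a b := Icc_subset_Ico_right hT.2
  have hsub' : Ico a T ⊆ Ico a b := Ico_subset_Ico_right hT.2.le
  refine ODE_solution_unique_of_mem_Icc_right hK
    (fun t ht => (hf t (hsub ht)).continuousWithinAt.mono hsub)
    (fun t ht => (hf t (hsub' ht)).mono_of_mem_nhdsWithin (Ico_mem_nhdsGE_of_mem (hsub' ht)))
    (fun t ht => hfs t (hsub' ht))
    (fun t ht => (hg t (hsub ht)).continuousWithinAt.mono hsub)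
    (fun t ht => (hg t (hsub' ht)).mono_of_mem_nhdsWithin (Ico_mem_nhdsGE_of_mem (hsub' ht)))
    (fun t ht => hgs t (hsub' ht)) ha ⟨hT.1, le_rfl⟩

/-- The segments `[f t, g t]`, `t ∈ [a, T]`, fill a compact subset of `C`, on which a `C¹` field
has a uniform Lipschitz constant. -/
theorem ODE_solution_unique_of_contDiffOn_of_mem_convex {v : E → E} {U C : Set E}
    (hU : IsOpen U) (hv : ContDiffOn ℝ 1 v U) (hC : Convex ℝ C) (hCU : C ⊆ U)
    {f g : ℝ → E} {a b : ℝ}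
    (hf : ∀ t ∈ Ico a b, HasDerivWithinAt f (v (f t)) (Ico a b) t)
    (hfC : ∀ t ∈ Ico a b, f t ∈ C)
    (hg : ∀ t ∈ Ico a b, HasDerivWithinAt g (v (g t)) (Ico a b) t)
    (hgC : ∀ t ∈ Ico a b, g t ∈ C)
    (ha : f a = g a) :
    EqOn f g (Ico a b) := by
  refine ODE_solution_unique_of_mem_Ico (v := fun _ => v) (s := fun t => segment ℝ (f t) (g t))
    (fun T hT => ?_) hf (fun t _ => left_mem_segment ℝ _ _) hg (fun t _ => right_mem_segment ℝ _ _)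
    ha
  have hsub : Icc a T ⊆ Ico a b := Icc_subset_Ico_right hT.2
  set K := (fun p : ℝ × ℝ => f p.1 + p.2 • (g p.1 - f p.1)) '' (Icc a T ×ˢ Icc 0 1)
  have hfc : ContinuousOn f (Icc a T) := fun t ht => (hf t (hsub ht)).continuousWithinAt.mono hsub
  have hgc : ContinuousOn g (Icc a T) := fun t ht => (hg t (hsub ht)).continuousWithinAt.mono hsub
  have hK : IsCompact K := by
    refine (isCompact_Icc.prod isCompact_Icc).image_of_continuousOn ?_
    have hf₁ := hfc.comp continuousOn_fst fun p (hp : p ∈ Icc a T ×ˢ Icc (0 : ℝ) 1) => hp.1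
    have hg₁ := hgc.comp continuousOn_fst fun p (hp : p ∈ Icc a T ×ˢ Icc (0 : ℝ) 1) => hp.1
    exact hf₁.add (continuousOn_snd.smul (hg₁.sub hf₁))
  have hKC : K ⊆ C := by
    rintro _ ⟨⟨t, θ⟩, ⟨ht, hθ⟩, rfl⟩
    exact hC.add_smul_sub_mem (hfC t (hsub ht)) (hgC t (hsub ht)) hθ
  obtain ⟨M, hM⟩ := hv.exists_lipschitzOnWith_of_convex_subset hU hK (hKC.trans hCU)
  refine ⟨M, fun t ht => hM _ ?_ (convex_segment _ _)⟩
  rw [segment_eq_image']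
  rintro _ ⟨θ, hθ, rfl⟩
  exact ⟨(t, θ), ⟨Ico_subset_Icc_self ht, hθ⟩, rfl⟩

theorem exists_forall_hasDerivAt_sub_self {w : ℝ → ℝ} {a b t₀ : ℝ} (hw : ContinuousOn w (Ioo a b))
    (ht₀ : t₀ ∈ Ioo a b) (y₀ : ℝ) :
    ∃ y : ℝ → ℝ, y t₀ = y₀ ∧ ∀ t ∈ Ioo a b, HasDerivAt y (w t - y t) t := by
  have hcont : ContinuousOn (fun s => Real.exp s * w s) (Ioo a b) :=
    Real.continuous_exp.continuousOn.mul hw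
  have hI : ∀ t ∈ Ioo a b,
      HasDerivAt (fun t => ∫ s in t₀..t, Real.exp s * w s) (Real.exp t * w t) t := fun t ht =>
    intervalIntegral.integral_hasDerivAt_right
      ((hcont.mono (ordConnected_Ioo.uIcc_subset ht₀ ht)).intervalIntegrable)
      (hcont.stronglyMeasurableAtFilter isOpen_Ioo t ht)
      (hcont.continuousAt (isOpen_Ioo.mem_nhds ht))
  refine ⟨fun t => Real.exp (-t) * (Real.exp t₀ * y₀ + ∫ s in t₀..t, Real.exp s * w s), ?_,
    fun t ht => ?_⟩
  · simp [← mul_assoc, ← Real.exp_add]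
  · refine (((Real.hasDerivAt_exp (-t)).comp t (hasDerivAt_neg t)).mul
      ((hI t ht).const_add _)).congr_deriv ?_
    simp only [Function.comp_apply, Real.exp_neg]
    field_simp
    ring

theorem eqOn_Ico_of_hasDerivWithinAt_sub_self {w f g : ℝ → E} {a b : ℝ}
    (hf : ∀ t ∈ Ico a b, HasDerivWithinAt f (w t - f t) (Ico a b) t)
    (hg : ∀ t ∈ Ico a b, HasDerivWithinAt g (w t - g t) (Ico a b) t) (ha : f a = g a) :
    EqOn f g (Ico a b) :=
  ODE_solution_unique_of_mem_Ico (v := fun t x => w t - x) (s := fun _ => univ)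
    (fun _ _ => ⟨0 + 1, fun t _ =>
      ((LipschitzWith.const (w t)).sub LipschitzWith.id).lipschitzOnWith⟩)
    hf (fun _ _ => mem_univ _) hg (fun _ _ => mem_univ _) ha

theorem monotoneOn_Ico_of_hasDerivWithinAt_nonneg {f f' : ℝ → ℝ} {a b : ℝ}
    (hf : ∀ t ∈ Ico a b, HasDerivWithinAt f (f' t) (Ico a b) t) (hf' : ∀ t ∈ Ico a b, 0 ≤ f' t) :
    MonotoneOn f (Ico a b) :=
  monotoneOn_of_hasDerivWithinAt_nonneg (convex_Ico a b) (fun t ht => (hf t ht).continuousWithinAt)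
    (fun t ht => (hf t (interior_subset ht)).mono interior_subset)
    (fun t ht => hf' t (interior_subset ht))

end General

/-- Equations (i) and (ii) solved for `(γ', α')` at the point `p = (γ, α)`. -/
noncomputable def ouField (lam sig : ℝ → ℝ) (p : ℝ × ℝ) : ℝ × ℝ :=
  ((sig p.1 ^ 2 * p.2 ^ 2)⁻¹, lam p.1 / (sig p.1 ^ 2 * p.2) - p.2)

def ouDomain (sig : ℝ → ℝ) : Set (ℝ × ℝ) := {p | 0 < sig p.1 ∧ 0 < p.2}

section OUField

variable {lam sig : ℝ → ℝ}

theorem isOpen_ouDomain (hsig : Continuous sig) : IsOpen (ouDomain sig) :=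
  (isOpen_lt continuous_const (hsig.comp continuous_fst)).inter
    (isOpen_lt continuous_const continuous_snd)

theorem contDiffOn_ouField {n : WithTop ℕ∞} (hlam : ContDiff ℝ n lam) (hsig : ContDiff ℝ n sig) :
    ContDiffOn ℝ n (ouField lam sig) (ouDomain sig) := by
  have hs : ContDiff ℝ n fun p : ℝ × ℝ => sig p.1 := hsig.comp contDiff_fst
  refine ((hs.pow 2).mul (contDiff_snd.pow 2)).contDiffOn.inv (fun p hp => ?_) |>.prodMk
    (((hlam.comp contDiff_fst).contDiffOn.div ((hs.pow 2).mul contDiff_snd).contDiffOn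
      fun p hp => ?_).sub contDiff_snd.contDiffOn)
  · exact (mul_pos (pow_pos hp.1 2) (pow_pos hp.2 2)).ne'
  · exact (mul_pos (pow_pos hp.1 2) hp.2).ne'

theorem ouField_congr {L S : ℝ → ℝ} (hL : EqOn L lam (Ici 0)) (hS : EqOn S sig (Ici 0))
    {p : ℝ × ℝ} (hp : 0 ≤ p.1) : ouField L S p = ouField lam sig p := by
  simp only [ouField, hL hp, hS hp]

theorem pair_eq_ouField_iff {p : ℝ × ℝ} {c a' : ℝ} (hs : 0 < sig p.1) (ha : 0 < p.2) (hc : 0 ≤ c) :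
    (c, a') = ouField lam sig p ↔ sig p.1 * p.2 * √c = 1 ∧ lam p.1 * c - a' / p.2 = 1 := by
  obtain ⟨g, a⟩ := p
  simp only [ouField, Prod.mk.injEq] at hs ha ⊢
  have hsqrt : sig g * a * √c = 1 ↔ c = (sig g ^ 2 * a ^ 2)⁻¹ := by
    rw [← mul_pow, ← inv_pow, ← Real.sqrt_eq_iff_eq_sq hc (by positivity)]
    field_simp
  rw [hsqrt]
  refine and_congr_right fun hcval => ?_
  subst hcval
  field_simp
  constructor <;> intro h <;> linarith

end OUField

theorem exists_ouField_solution {L S : ℝ → ℝ} (hL : ContDiff ℝ 1 L) (hS : ContDiff ℝ 1 S)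
    {p₀ : ℝ × ℝ} (hp₀ : p₀ ∈ ouDomain S) :
    ∃ ε > 0, ∃ f : ℝ → ℝ × ℝ, f 0 = p₀ ∧
      ∀ t ∈ Ioo (-ε) ε, HasDerivAt f (ouField L S (f t)) t ∧ f t ∈ ouDomain S := by
  have hU := isOpen_ouDomain hS.continuous
  obtain ⟨f, hf0, ε₀, hε₀, hf⟩ :=
    ContDiffAt.exists_forall_mem_closedBall_exists_eq_forall_mem_Ioo_hasDerivAt₀
      ((contDiffOn_ouField hL hS).contDiffAt (hU.mem_nhds hp₀)) 0
  simp only [zero_sub, zero_add] at hf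
  obtain ⟨δ, hδ, hball⟩ := Metric.eventually_nhds_iff_ball.1 <|
    (hf 0 ⟨neg_lt_zero.2 hε₀, hε₀⟩).continuousAt.preimage_mem_nhds (hU.mem_nhds (hf0 ▸ hp₀))
  refine ⟨min δ ε₀, lt_min hδ hε₀, f, hf0, fun t ht => ⟨hf t ?_, hball t ?_⟩⟩
  · exact ⟨(neg_le_neg (min_le_right δ ε₀)).trans_lt ht.1, ht.2.trans_le (min_le_right δ ε₀)⟩
  · rw [Real.ball_eq_Ioo, zero_sub, zero_add]
    exact ⟨(neg_le_neg (min_le_left δ ε₀)).trans_lt ht.1, ht.2.trans_le (min_le_left δ ε₀)⟩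

namespace SolvesOUSystem

variable {lam sig mu : ℝ → ℝ} {α₀ β₀ ε : ℝ} {α β γ α' β' γ' : ℝ → ℝ}

theorem mono {ε' : ℝ} (h : SolvesOUSystem lam sig mu α₀ β₀ ε α β γ α' β' γ') (hε' : ε' ≤ ε) :
    SolvesOUSystem lam sig mu α₀ β₀ ε' α β γ α' β' γ' := by
  have hsub : Ico 0 ε' ⊆ Ico 0 ε := Ico_subset_Ico_right hε'
  obtain ⟨hα, hβ, hγ, hα', hβ', hγ', hαpos, hγ'pos, hα0, hβ0, hγ0, hi, hii, hiii⟩ := h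
  exact ⟨fun t ht => (hα t (hsub ht)).mono hsub, fun t ht => (hβ t (hsub ht)).mono hsub,
    fun t ht => (hγ t (hsub ht)).mono hsub, hα'.mono hsub, hβ'.mono hsub, hγ'.mono hsub,
    fun t ht => hαpos t (hsub ht), fun t ht => hγ'pos t (hsub ht), hα0, hβ0, hγ0,
    fun t ht => hi t (hsub ht), fun t ht => hii t (hsub ht), fun t ht => hiii t (hsub ht)⟩

theorem nonneg (h : SolvesOUSystem lam sig mu α₀ β₀ ε α β γ α' β' γ') :
    ∀ t ∈ Ico 0 ε, 0 ≤ γ t := fun t ht => by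
  obtain ⟨-, -, hγ, -, -, -, -, hγ'pos, -, -, hγ0, -⟩ := h
  simpa [hγ0] using monotoneOn_Ico_of_hasDerivWithinAt_nonneg hγ (fun t ht => (hγ'pos t ht).le)
    ⟨le_rfl, ht.1.trans_lt ht.2⟩ ht ht.1

theorem pair_eq_ouField (h : SolvesOUSystem lam sig mu α₀ β₀ ε α β γ α' β' γ')
    (hsigpos : ∀ t ∈ Ici (0 : ℝ), 0 < sig t) :
    ∀ t ∈ Ico 0 ε, (γ' t, α' t) = ouField lam sig (γ t, α t) := fun t ht => by
  have hγ := h.nonneg t ht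
  obtain ⟨-, -, -, -, -, -, hαpos, hγ'pos, -, -, -, hi, hii, -⟩ := h
  exact (pair_eq_ouField_iff (p := (γ t, α t)) (hsigpos _ hγ) (hαpos t ht)
    (hγ'pos t ht).le).2 ⟨hi t ht, hii t ht⟩

theorem mem_Ici_prod_Ioi (h : SolvesOUSystem lam sig mu α₀ β₀ ε α β γ α' β' γ') :
    ∀ t ∈ Ico 0 ε, (γ t, α t) ∈ Ici 0 ×ˢ Ioi 0 := fun t ht => by
  refine ⟨h.nonneg t ht, ?_⟩
  obtain ⟨-, -, -, -, -, -, hαpos, -⟩ := h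
  exact hαpos t ht

theorem hasDerivWithinAt_ouField (h : SolvesOUSystem lam sig mu α₀ β₀ ε α β γ α' β' γ')
    (hsigpos : ∀ t ∈ Ici (0 : ℝ), 0 < sig t) {L S : ℝ → ℝ} (hL : EqOn L lam (Ici 0))
    (hS : EqOn S sig (Ici 0)) :
    ∀ t ∈ Ico 0 ε, HasDerivWithinAt (fun s => (γ s, α s)) (ouField L S (γ t, α t)) (Ico 0 ε) t :=
  fun t ht => by
    rw [ouField_congr hL hS (h.nonneg t ht), ← h.pair_eq_ouField hsigpos t ht]
    obtain ⟨hα, -, hγ, -⟩ := h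
    exact (hγ t ht).prodMk (hα t ht)

theorem eqOn (hlam : ContDiffOn ℝ 1 lam (Ici 0)) (hsig : ContDiffOn ℝ 1 sig (Ici 0))
    (hsigpos : ∀ t ∈ Ici (0 : ℝ), 0 < sig t) {α₁ β₁ γ₁ a₁ b₁ c₁ α₂ β₂ γ₂ a₂ b₂ c₂ : ℝ → ℝ}
    (h₁ : SolvesOUSystem lam sig mu α₀ β₀ ε α₁ β₁ γ₁ a₁ b₁ c₁)
    (h₂ : SolvesOUSystem lam sig mu α₀ β₀ ε α₂ β₂ γ₂ a₂ b₂ c₂) :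
    ∀ t ∈ Ico 0 ε, α₁ t = α₂ t ∧ β₁ t = β₂ t ∧ γ₁ t = γ₂ t := by
  obtain ⟨S, hS, hSsig⟩ := hsig.exists_contDiff_eqOn_Ici
  obtain ⟨L, hL, hLlam⟩ := hlam.exists_contDiff_eqOn_Ici
  obtain ⟨-, hβ₁, -, -, -, -, -, -, hα₁0, hβ₁0, hγ₁0, -, -, hiii₁⟩ := id h₁
  obtain ⟨-, hβ₂, -, -, -, -, -, -, hα₂0, hβ₂0, hγ₂0, -, -, hiii₂⟩ := id h₂
  have hγα : EqOn (fun t => (γ₁ t, α₁ t)) (fun t => (γ₂ t, α₂ t)) (Ico 0 ε) :=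
    ODE_solution_unique_of_contDiffOn_of_mem_convex (isOpen_ouDomain hS.continuous)
      (contDiffOn_ouField hL hS) ((convex_Ici 0).prod (convex_Ioi 0))
      (fun p hp => ⟨hSsig hp.1 ▸ hsigpos _ hp.1, hp.2⟩)
      (h₁.hasDerivWithinAt_ouField hsigpos hLlam hSsig) h₁.mem_Ici_prod_Ioi
      (h₂.hasDerivWithinAt_ouField hsigpos hLlam hSsig) h₂.mem_Ici_prod_Ioi
      (by rw [hα₁0, hγ₁0, hα₂0, hγ₂0])
  have hc : ∀ t ∈ Ico 0 ε, c₁ t = c₂ t := fun t ht => congrArg Prod.fst <|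
    (h₁.pair_eq_ouField hsigpos t ht).trans <|
      (congrArg (ouField lam sig) (hγα ht)).trans (h₂.pair_eq_ouField hsigpos t ht).symm
  have hβ : EqOn β₁ β₂ (Ico 0 ε) :=
    eqOn_Ico_of_hasDerivWithinAt_sub_self (w := fun t => α₁ t * mu (γ₁ t) * c₁ t)
      (fun t ht => (hβ₁ t ht).congr_deriv (by linarith [hiii₁ t ht]))
      (fun t ht => (hβ₂ t ht).congr_deriv <| by
        obtain ⟨hγ, hα⟩ := Prod.ext_iff.1 (hγα ht)
        simp only at hγ hα
        rw [hγ, hα, hc t ht]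
        linarith [hiii₂ t ht])
      (hβ₁0.trans hβ₂0.symm)
  exact fun t ht => ⟨(Prod.ext_iff.1 (hγα ht)).2, hβ ht, (Prod.ext_iff.1 (hγα ht)).1⟩

end SolvesOUSystem

theorem solvesOUSystem_of_hasDerivWithinAt {lam sig mu : ℝ → ℝ} {α₀ β₀ ε : ℝ}
    (hsigpos : ∀ t ∈ Ici (0 : ℝ), 0 < sig t) {f v : ℝ → ℝ × ℝ} {β w : ℝ → ℝ}
    (hf : ∀ t ∈ Ico 0 ε, HasDerivWithinAt f (v t) (Ico 0 ε) t) (hv : ContinuousOn v (Ico 0 ε))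
    (hfv : ∀ t ∈ Ico 0 ε, v t = ouField lam sig (f t))
    (hfC : ∀ t ∈ Ico 0 ε, f t ∈ Ici 0 ×ˢ Ioi 0) (hf0 : f 0 = (0, α₀))
    (hβ : ∀ t ∈ Ico 0 ε, HasDerivWithinAt β (w t - β t) (Ico 0 ε) t)
    (hw : ContinuousOn w (Ico 0 ε)) (hwv : ∀ t ∈ Ico 0 ε, w t = (f t).2 * mu (f t).1 * (v t).1)
    (hβ0 : β 0 = β₀) :
    SolvesOUSystem lam sig mu α₀ β₀ ε (fun t => (f t).2) β (fun t => (f t).1) (fun t => (v t).2)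
      (fun t => w t - β t) (fun t => (v t).1) := by
  have hγ'pos : ∀ t ∈ Ico 0 ε, 0 < (v t).1 := fun t ht => by
    have hs := hsigpos _ (hfC t ht).1
    have ha : 0 < (f t).2 := (hfC t ht).2
    simp only [hfv t ht, ouField]
    positivity
  have heqs : ∀ t ∈ Ico 0 ε, sig (f t).1 * (f t).2 * √(v t).1 = 1 ∧
      lam (f t).1 * (v t).1 - (v t).2 / (f t).2 = 1 := fun t ht =>
    (pair_eq_ouField_iff (hsigpos _ (hfC t ht).1) (hfC t ht).2 (hγ'pos t ht).le).1 (hfv t ht)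
  exact ⟨fun t ht => (hasFDerivAt_snd (p := f t)).comp_hasDerivWithinAt t (hf t ht), hβ,
    fun t ht => (hasFDerivAt_fst (p := f t)).comp_hasDerivWithinAt t (hf t ht), hv.snd,
    hw.sub fun t ht => (hβ t ht).continuousWithinAt, hv.fst, fun t ht => (hfC t ht).2, hγ'pos,
    by simp [hf0], hβ0, by simp [hf0], fun t ht => (heqs t ht).1, fun t ht => (heqs t ht).2,
    fun t ht => by simp only [hwv t ht]; ring⟩

theorem exists_solvesOUSystem {lam sig mu : ℝ → ℝ} (hlam : ContDiffOn ℝ 1 lam (Ici 0))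
    (hsig : ContDiffOn ℝ 1 sig (Ici 0)) (hsigpos : ∀ t ∈ Ici (0 : ℝ), 0 < sig t)
    (hmu : ContinuousOn mu (Ici 0)) {α₀ β₀ : ℝ} (hα₀ : 0 < α₀) :
    ∃ ε > 0, ∃ α β γ α' β' γ' : ℝ → ℝ, SolvesOUSystem lam sig mu α₀ β₀ ε α β γ α' β' γ' := by
  obtain ⟨S, hS, hSsig⟩ := hsig.exists_contDiff_eqOn_Ici
  obtain ⟨L, hL, hLlam⟩ := hlam.exists_contDiff_eqOn_Ici
  obtain ⟨ε, hε, f, hf0, hf⟩ := exists_ouField_solution hL hS (p₀ := (0, α₀))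
    ⟨hSsig self_mem_Ici ▸ hsigpos 0 self_mem_Ici, hα₀⟩
  have hIco : Ico 0 ε ⊆ Ioo (-ε) ε := Ico_subset_Ioo_left (neg_lt_zero.2 hε)
  have hfc : ContinuousOn f (Ioo (-ε) ε) := fun t ht =>
    (hf t ht).1.continuousAt.continuousWithinAt
  have hv : ContinuousOn (fun t => ouField L S (f t)) (Ioo (-ε) ε) :=
    (contDiffOn_ouField hL hS).continuousOn.comp hfc fun t ht => (hf t ht).2
  have hγ : ∀ t ∈ Ico 0 ε, 0 ≤ (f t).1 := fun t ht => by
    have hmono := monotoneOn_Ico_of_hasDerivWithinAt_nonneg (f := fun t => (f t).1)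
      (fun t ht =>
        ((hasFDerivAt_fst (p := f t)).comp_hasDerivAt t (hf t (hIco ht)).1).hasDerivWithinAt)
      (fun t _ => by simp only [ContinuousLinearMap.coe_fst', ouField]; positivity)
    simpa [hf0] using hmono ⟨le_rfl, ht.1.trans_lt ht.2⟩ ht ht.1
  -- `γ` is negative for `t < 0`, where `μ` need not be continuous.
  set w := fun t => (f t).2 * mu (max (f t).1 0) * (ouField L S (f t)).1
  have hw : ContinuousOn w (Ioo (-ε) ε) :=
    (hfc.snd.mul ((hmu.comp_continuous (continuous_id.max continuous_const)
      fun x => le_max_right x 0).comp_continuousOn hfc.fst)).mul hv.fst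
  obtain ⟨β, hβ0, hβ⟩ := exists_forall_hasDerivAt_sub_self hw ⟨neg_lt_zero.2 hε, hε⟩ β₀
  exact ⟨ε, hε, _, _, _, _, _, _, solvesOUSystem_of_hasDerivWithinAt hsigpos
    (fun t ht => (hf t (hIco ht)).1.hasDerivWithinAt) (hv.mono hIco)
    (fun t ht => ouField_congr hLlam hSsig (hγ t ht))
    (fun t ht => ⟨hγ t ht, (hf t (hIco ht)).2.2⟩) hf0
    (fun t ht => (hβ t (hIco ht)).hasDerivWithinAt) (hw.mono hIco)
    (fun t ht => by simp only [w, max_eq_left (hγ t ht)]) hβ0⟩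

theorem ou_transformation_ode_existence_uniqueness_general
    (lam sig mu : ℝ → ℝ)
    (hlam : ContDiffOn ℝ 1 lam (Set.Ici 0))
    (hsig : ContDiffOn ℝ 2 sig (Set.Ici 0))
    (hsigpos : ∀ t ∈ Set.Ici (0 : ℝ), 0 < sig t)
    (hmu : ContinuousOn mu (Set.Ici 0))
    (α₀ β₀ : ℝ) (hα₀ : 0 < α₀) :
    (∃ ε > 0, ∃ α β γ α' β' γ' : ℝ → ℝ,
      SolvesOUSystem lam sig mu α₀ β₀ ε α β γ α' β' γ') ∧
    (∀ ε₁ ε₂ : ℝ, ∀ α₁ β₁ γ₁ a₁ b₁ c₁ α₂ β₂ γ₂ a₂ b₂ c₂ : ℝ → ℝ,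
      SolvesOUSystem lam sig mu α₀ β₀ ε₁ α₁ β₁ γ₁ a₁ b₁ c₁ →
      SolvesOUSystem lam sig mu α₀ β₀ ε₂ α₂ β₂ γ₂ a₂ b₂ c₂ →
      ∀ t ∈ Set.Ico (0 : ℝ) (min ε₁ ε₂), α₁ t = α₂ t ∧ β₁ t = β₂ t ∧ γ₁ t = γ₂ t) := by
  have hsig₁ : ContDiffOn ℝ 1 sig (Ici 0) := hsig.of_le one_le_two
  refine ⟨exists_solvesOUSystem hlam hsig₁ hsigpos hmu hα₀,
    fun ε₁ ε₂ _ _ _ _ _ _ _ _ _ _ _ _ h₁ h₂ => ?_⟩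
  exact (h₁.mono (min_le_left ε₁ ε₂)).eqOn hlam hsig₁ hsigpos (h₂.mono (min_le_right ε₁ ε₂))

/-- Lemma 3.1. For `λ ∈ C¹` positive, `σ ∈ C²` positive and `μ`
continuous on `[0,∞)`, the ODE system for the transformation functions `α, β, γ` has a
local solution with the prescribed initial data, and any two such solutions agree on the
intersection of their domains. -/
theorem ou_transformation_ode_existence_uniqueness
    (lam sig mu : ℝ → ℝ)
    (hlam : ContDiffOn ℝ 1 lam (Set.Ici 0))
    (hlampos : ∀ t ∈ Set.Ici (0 : ℝ), 0 < lam t)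
    (hsig : ContDiffOn ℝ 2 sig (Set.Ici 0))
    (hsigpos : ∀ t ∈ Set.Ici (0 : ℝ), 0 < sig t)
    (hmu : ContinuousOn mu (Set.Ici 0))
    (α₀ β₀ : ℝ) (hα₀ : 0 < α₀) :
    (∃ ε > 0, ∃ α β γ α' β' γ' : ℝ → ℝ,
      SolvesOUSystem lam sig mu α₀ β₀ ε α β γ α' β' γ') ∧
    (∀ ε₁ ε₂ : ℝ, ∀ α₁ β₁ γ₁ a₁ b₁ c₁ α₂ β₂ γ₂ a₂ b₂ c₂ : ℝ → ℝ,
      SolvesOUSystem lam sig mu α₀ β₀ ε₁ α₁ β₁ γ₁ a₁ b₁ c₁ →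
      SolvesOUSystem lam sig mu α₀ β₀ ε₂ α₂ β₂ γ₂ a₂ b₂ c₂ →
      ∀ t ∈ Set.Ico (0 : ℝ) (min ε₁ ε₂), α₁ t = α₂ t ∧ β₁ t = β₂ t ∧ γ₁ t = γ₂ t) :=
  ou_transformation_ode_existence_uniqueness_general lam sig mu hlam hsig hsigpos hmu α₀ β₀ hα₀
end

section
/- Let λ : [0, ∞) → (0, ∞) be continuous and σ : [0, ∞) → (0, ∞) be continuously differentiable. Suppose γ : (0, ε) → (0, ∞) is twice differentiable with γ′(t) > 0 and α : (0, ε) → (0, ∞) is differentiable, and that on (0, ε) they satisfy σ(γ(t)) · α(t) · √(γ′(t)) = 1 and λ(γ(t)) · γ′(t) − α′(t)/α(t) = 1. Then for all t ∈ (0, ε), γ″(t)/γ′(t) = 2 − 2 γ′(t) · ( λ(γ(t)) + σ′(γ(t))/σ(γ(t)) ). -/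
/-!
Differentiating `σ(γ) α √γ' = 1` logarithmically gives
`σ'(γ) γ' / σ(γ) + α' / α + γ'' / (2 γ') = 0`, and the second equation replaces `α' / α`
by `λ(γ) γ' − 1`.
-/

open Filter Topology

theorem HasDerivAt.div_add_div_add_div_eq_zero_of_mul_mul_eq_one
    {𝕜 : Type*} [NontriviallyNormedField 𝕜] {f g h : 𝕜 → 𝕜} {f' g' h' x : 𝕜}
    (hf : HasDerivAt f f' x) (hg : HasDerivAt g g' x) (hh : HasDerivAt h h' x)
    (hfgh : (fun y ↦ f y * g y * h y) =ᶠ[𝓝 x] fun _ ↦ 1) :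
    f' / f x + g' / g x + h' / h x = 0 := by
  have hderiv : (f' * g x + f x * g') * h x + f x * g x * h' = 0 :=
    (((hf.mul hg).mul hh).congr_of_eventuallyEq hfgh.symm).unique (hasDerivAt_const x 1)
  have hx : f x * g x * h x = 1 := hfgh.self_of_nhds
  have hh0 : h x ≠ 0 := right_ne_zero_of_mul_eq_one hx
  have hfg0 : f x * g x ≠ 0 := left_ne_zero_of_mul_eq_one hx
  have hf0 : f x ≠ 0 := left_ne_zero_of_mul hfg0
  have hg0 : g x ≠ 0 := right_ne_zero_of_mul hfg0
  field_simp
  linear_combination hderiv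

theorem gamma_second_order_ode_general
    (lam sig : ℝ → ℝ) (ε : ℝ)
    (hsig : ContDiffOn ℝ 1 sig (Set.Ici 0))
    (γ α γ' γ'' α' : ℝ → ℝ)
    (hγd : ∀ t ∈ Set.Ioo (0 : ℝ) ε, HasDerivAt γ (γ' t) t)
    (hγdd : ∀ t ∈ Set.Ioo (0 : ℝ) ε, HasDerivAt γ' (γ'' t) t)
    (hαd : ∀ t ∈ Set.Ioo (0 : ℝ) ε, HasDerivAt α (α' t) t)
    (hγpos : ∀ t ∈ Set.Ioo (0 : ℝ) ε, 0 < γ t)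
    (heq1 : ∀ t ∈ Set.Ioo (0 : ℝ) ε, sig (γ t) * α t * Real.sqrt (γ' t) = 1)
    (heq2 : ∀ t ∈ Set.Ioo (0 : ℝ) ε, lam (γ t) * γ' t - α' t / α t = 1) :
    ∀ t ∈ Set.Ioo (0 : ℝ) ε,
      γ'' t / γ' t = 2 - 2 * γ' t * (lam (γ t) + deriv sig (γ t) / sig (γ t)) := by
  intro t ht
  have hγ't : 0 < γ' t := Real.sqrt_ne_zero'.mp (right_ne_zero_of_mul_eq_one (heq1 t ht))
  have hsigd : HasDerivAt sig (deriv sig (γ t)) (γ t) :=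
    ((hsig.differentiableOn one_ne_zero _ (hγpos t ht).le).differentiableAt
      (Ici_mem_nhds (hγpos t ht))).hasDerivAt
  have hconst : (fun u ↦ sig (γ u) * α u * √(γ' u)) =ᶠ[𝓝 t] fun _ ↦ 1 :=
    eventually_of_mem (isOpen_Ioo.mem_nhds ht) heq1
  have hlog := HasDerivAt.div_add_div_add_div_eq_zero_of_mul_mul_eq_one
    (hsigd.comp t (hγd t ht)) (hαd t ht) ((hγdd t ht).sqrt hγ't.ne') hconst
  have hsqrt : γ'' t / (2 * √(γ' t)) / √(γ' t) = γ'' t / (2 * γ' t) := by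
    rw [div_div, mul_assoc, Real.mul_self_sqrt hγ't.le]
  rw [hsqrt, Function.comp_apply] at hlog
  linear_combination 2 * hlog + 2 * heq2 t ht

/-- key reduction in the proof of Lemma 3.1. If `α, γ` satisfy
`σ(γ(t)) α(t) √(γ'(t)) = 1` and `λ(γ(t)) γ'(t) − α'(t)/α(t) = 1` on `(0, ε)`, with `γ`
twice differentiable, `γ' > 0`, `γ > 0`, `α > 0`, `λ` continuous positive and `σ ∈ C¹`
positive, then `γ''(t)/γ'(t) = 2 − 2 γ'(t)(λ(γ(t)) + σ'(γ(t))/σ(γ(t)))`. -/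
theorem gamma_second_order_ode
    (lam sig : ℝ → ℝ) (ε : ℝ)
    (hlam : ContinuousOn lam (Set.Ici 0))
    (hlampos : ∀ t ∈ Set.Ici (0 : ℝ), 0 < lam t)
    (hsig : ContDiffOn ℝ 1 sig (Set.Ici 0))
    (hsigpos : ∀ t ∈ Set.Ici (0 : ℝ), 0 < sig t)
    (γ α γ' γ'' α' : ℝ → ℝ)
    (hγd : ∀ t ∈ Set.Ioo (0 : ℝ) ε, HasDerivAt γ (γ' t) t)
    (hγdd : ∀ t ∈ Set.Ioo (0 : ℝ) ε, HasDerivAt γ' (γ'' t) t)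
    (hαd : ∀ t ∈ Set.Ioo (0 : ℝ) ε, HasDerivAt α (α' t) t)
    (hγpos : ∀ t ∈ Set.Ioo (0 : ℝ) ε, 0 < γ t)
    (hγ'pos : ∀ t ∈ Set.Ioo (0 : ℝ) ε, 0 < γ' t)
    (hαpos : ∀ t ∈ Set.Ioo (0 : ℝ) ε, 0 < α t)
    (heq1 : ∀ t ∈ Set.Ioo (0 : ℝ) ε, sig (γ t) * α t * Real.sqrt (γ' t) = 1)
    (heq2 : ∀ t ∈ Set.Ioo (0 : ℝ) ε, lam (γ t) * γ' t - α' t / α t = 1) :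
    ∀ t ∈ Set.Ioo (0 : ℝ) ε,
      γ'' t / γ' t = 2 - 2 * γ' t * (lam (γ t) + deriv sig (γ t) / sig (γ t)) :=
  gamma_second_order_ode_general lam sig ε hsig γ α γ' γ'' α' hγd hγdd hαd hγpos heq1 heq2
end

section
/- Let τ be a nonnegative random variable on a probability space (Ω, ℱ, P), let (α_k)_{k≥1} be a strictly increasing sequence of positive reals with α_k → ∞, and let (C_k)_{k≥1} be real numbers with ∑_{k=1}^∞ |C_k| e^{−α_k t₀} < ∞ for some t₀ > 0. Suppose P(τ > t) = ∑_{k=1}^∞ C_k e^{−α_k t} for all t ≥ t₀. Then E[e^{θτ}] < ∞ for every θ < α₁; i.e., the distribution of τ is light-tailed with exponential moments up to order α₁. -/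
/-!
Since `α₀ ≤ α_k`, each term of the series at time `t ≥ t₀` is at most its value at `t₀` times
`e^{-α₀ (t - t₀)}`, so `P(τ > t) = O(e^{-α₀ t})`. By the layer-cake formula
`E[e^{θτ} - 1] = ∫₀^∞ θ e^{θt} P(τ > t) dt`, which converges for `0 < θ < α₀`.
-/

open MeasureTheory Filter Real Set

section ExponentialSeries

variable {α C : ℕ → ℝ} {a t₀ t : ℝ}

lemma exp_neg_mul_le_exp_neg_mul_mul_exp {b : ℝ} (hab : a ≤ b) (ht : t₀ ≤ t) :
    exp (-b * t) ≤ exp (-b * t₀) * exp (-a * (t - t₀)) := by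
  rw [← exp_add]
  exact exp_le_exp.2 (by nlinarith)

lemma abs_mul_exp_neg_mul_le (hα : ∀ k, a ≤ α k) (ht : t₀ ≤ t) (k : ℕ) :
    |C k| * exp (-α k * t) ≤ |C k| * exp (-α k * t₀) * exp (-a * (t - t₀)) := by
  rw [mul_assoc]
  exact mul_le_mul_of_nonneg_left (exp_neg_mul_le_exp_neg_mul_mul_exp (hα k) ht) (abs_nonneg _)

lemma summable_abs_mul_exp_neg_mul_of_le (hα : ∀ k, a ≤ α k) (ht : t₀ ≤ t)
    (hsum : Summable fun k => |C k| * exp (-α k * t₀)) :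
    Summable fun k => |C k| * exp (-α k * t) :=
  (hsum.mul_right _).of_nonneg_of_le (fun _ => by positivity) (abs_mul_exp_neg_mul_le hα ht)

lemma tsum_mul_exp_neg_mul_le (hα : ∀ k, a ≤ α k) (ht : t₀ ≤ t)
    (hsum : Summable fun k => |C k| * exp (-α k * t₀)) :
    ∑' k, C k * exp (-α k * t) ≤
      (∑' k, |C k| * exp (-α k * t₀)) * exp (a * t₀) * exp (-a * t) := by
  have hsum_t := summable_abs_mul_exp_neg_mul_of_le hα ht hsum
  calc ∑' k, C k * exp (-α k * t)
      ≤ ∑' k, |C k| * exp (-α k * t) :=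
        Summable.tsum_le_tsum (fun k => mul_le_mul_of_nonneg_right (le_abs_self _) (exp_pos _).le)
          (hsum_t.of_norm_bounded fun k => by simp) hsum_t
    _ ≤ ∑' k, |C k| * exp (-α k * t₀) * exp (-a * (t - t₀)) :=
        Summable.tsum_le_tsum (abs_mul_exp_neg_mul_le hα ht) hsum_t (hsum.mul_right _)
    _ = (∑' k, |C k| * exp (-α k * t₀)) * exp (a * t₀) * exp (-a * t) := by
        rw [tsum_mul_right, mul_assoc, ← exp_add]
        congr 2
        ring

end ExponentialSeries

section ExponentialMoment

variable {Ω : Type*} [MeasurableSpace Ω] {P : Measure Ω} {τ : Ω → ℝ}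

lemma lintegral_ofReal_exp_mul_sub_one_eq (hτ : AEMeasurable τ P) (hτnn : 0 ≤ᵐ[P] τ) {θ : ℝ}
    (hθ : 0 < θ) :
    ∫⁻ ω, ENNReal.ofReal (exp (θ * τ ω) - 1) ∂P =
      ∫⁻ t in Ioi 0, P {ω | t < τ ω} * ENNReal.ofReal (θ * exp (θ * t)) := by
  have hg : Continuous fun t => θ * exp (θ * t) := by fun_prop
  rw [← lintegral_comp_eq_lintegral_meas_lt_mul P hτnn hτ (fun t _ => hg.intervalIntegrable 0 t)
    (ae_of_all _ fun t => by positivity)]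
  congr with ω
  rw [intervalIntegral.integral_const_mul,
    intervalIntegral.integral_comp_mul_left (fun t => exp t) hθ.ne']
  simp [hθ.ne']

variable [IsFiniteMeasure P]

lemma exists_measureReal_lt_le_exp_of_forall_ge {M a t₀ : ℝ} (ha : 0 ≤ a)
    (htail : ∀ t, t₀ ≤ t → P.real {ω | t < τ ω} ≤ M * exp (-a * t)) :
    ∃ K, ∀ t, P.real {ω | t < τ ω} ≤ K * exp (-a * t) := by
  refine ⟨max M (P.real univ * exp (a * t₀)), fun t => ?_⟩
  rcases le_or_gt t₀ t with ht | ht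
  · exact (htail t ht).trans (by gcongr; exact le_max_left _ _)
  · calc P.real {ω | t < τ ω}
        ≤ P.real univ := measureReal_mono (subset_univ _)
      _ ≤ P.real univ * exp (a * t₀) * exp (-a * t) := by
        rw [mul_assoc, ← exp_add]
        exact le_mul_of_one_le_right measureReal_nonneg (one_le_exp (by nlinarith))
      _ ≤ max M (P.real univ * exp (a * t₀)) * exp (-a * t) := by
        gcongr
        exact le_max_right _ _

lemma lintegral_measure_lt_mul_exp_lt_top {K a θ : ℝ} (hθ : 0 ≤ θ) (hθa : θ < a)
    (htail : ∀ t, P.real {ω | t < τ ω} ≤ K * exp (-a * t)) :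
    ∫⁻ t in Ioi 0, P {ω | t < τ ω} * ENNReal.ofReal (θ * exp (θ * t)) < ⊤ := by
  have hint : IntegrableOn (fun t => K * θ * exp ((θ - a) * t)) (Ioi 0) :=
    (integrableOn_exp_mul_Ioi (by linarith) 0).const_mul _
  refine lt_of_le_of_lt (setLIntegral_mono' measurableSet_Ioi fun t _ => ?_) hint.lintegral_lt_top
  calc P {ω | t < τ ω} * ENNReal.ofReal (θ * exp (θ * t))
      = ENNReal.ofReal (P.real {ω | t < τ ω}) * ENNReal.ofReal (θ * exp (θ * t)) := by
        rw [ofReal_measureReal]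
    _ ≤ ENNReal.ofReal (K * exp (-a * t)) * ENNReal.ofReal (θ * exp (θ * t)) := by
        gcongr
        exact htail t
    _ = ENNReal.ofReal (K * θ * exp ((θ - a) * t)) := by
        rw [← ENNReal.ofReal_mul' (by positivity)]
        congr 1
        rw [show K * exp (-a * t) * (θ * exp (θ * t)) = K * θ * (exp (-a * t) * exp (θ * t)) by
          ring, ← exp_add]
        ring_nf

theorem integrable_exp_mul_of_measureReal_lt_le (hτ : AEMeasurable τ P) (hτnn : 0 ≤ᵐ[P] τ)
    {M a t₀ θ : ℝ} (htail : ∀ t, t₀ ≤ t → P.real {ω | t < τ ω} ≤ M * exp (-a * t))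
    (hθ : θ < a) :
    Integrable (fun ω => exp (θ * τ ω)) P := by
  have hmeas : AEStronglyMeasurable (fun ω => exp (θ * τ ω)) P :=
    (hτ.const_mul θ).exp.aestronglyMeasurable
  rcases le_or_gt θ 0 with hθ0 | hθ0
  · refine Integrable.of_bound hmeas 1 ?_
    filter_upwards [hτnn] with ω hω
    rw [Real.norm_of_nonneg (exp_pos _).le]
    exact exp_le_one_iff.2 (mul_nonpos_of_nonpos_of_nonneg hθ0 hω)
  obtain ⟨K, hK⟩ := exists_measureReal_lt_le_exp_of_forall_ge (by linarith) htail
  have hsub : Integrable (fun ω => exp (θ * τ ω) - 1) P := by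
    have hnn : 0 ≤ᵐ[P] fun ω => exp (θ * τ ω) - 1 := by
      filter_upwards [hτnn] with ω hω
      exact sub_nonneg.2 (one_le_exp (mul_nonneg hθ0.le hω))
    have hmeas' : AEStronglyMeasurable (fun ω => exp (θ * τ ω) - 1) P :=
      hmeas.sub aestronglyMeasurable_const
    refine (lintegral_ofReal_ne_top_iff_integrable hmeas' hnn).1 ?_
    rw [lintegral_ofReal_exp_mul_sub_one_eq hτ hτnn hθ0]
    exact (lintegral_measure_lt_mul_exp_lt_top hθ0.le hθ hK).ne
  exact (hsub.add (integrable_const 1)).congr (ae_of_all _ fun ω => sub_add_cancel _ _)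

end ExponentialMoment

theorem light_tail_of_exponential_series_survival_general
    {Ω : Type*} [MeasurableSpace Ω] {P : Measure Ω} [IsProbabilityMeasure P]
    (τ : Ω → ℝ) (hτmeas : Measurable τ) (hτnn : ∀ ω, 0 ≤ τ ω)
    (α C : ℕ → ℝ) (hmono : StrictMono α)
    (t₀ : ℝ)
    (hsum : Summable fun k => |C k| * Real.exp (-α k * t₀))
    (hsurv : ∀ t, t₀ ≤ t →
      (P {ω | t < τ ω}).toReal = ∑' k, C k * Real.exp (-α k * t))
    (θ : ℝ) (hθ : θ < α 0) :
    Integrable (fun ω => Real.exp (θ * τ ω)) P := by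
  have htail : ∀ t, t₀ ≤ t → P.real {ω | t < τ ω} ≤
      (∑' k, |C k| * exp (-α k * t₀)) * exp (α 0 * t₀) * exp (-α 0 * t) := fun t ht =>
    (hsurv t ht).trans_le (tsum_mul_exp_neg_mul_le (fun k => hmono.monotone k.zero_le) ht hsum)
  exact integrable_exp_mul_of_measureReal_lt_le hτmeas.aemeasurable (ae_of_all _ hτnn) htail hθ

/-- Lemma 2.2, abstract form. A nonnegative random variable whose
survival function is eventually an absolutely convergent exponential series
`P(τ > t) = ∑ C_k e^{−α_k t}` with strictly increasing positive exponents `α_k → ∞` is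
light-tailed: `E[e^{θτ}] < ∞` for every `θ < α₀`. -/
theorem light_tail_of_exponential_series_survival
    {Ω : Type*} [MeasurableSpace Ω] {P : Measure Ω} [IsProbabilityMeasure P]
    (τ : Ω → ℝ) (hτmeas : Measurable τ) (hτnn : ∀ ω, 0 ≤ τ ω)
    (α C : ℕ → ℝ) (hmono : StrictMono α) (hpos : ∀ k, 0 < α k)
    (htend : Tendsto α atTop atTop)
    (t₀ : ℝ) (ht₀ : 0 < t₀)
    (hsum : Summable fun k => |C k| * Real.exp (-α k * t₀))
    (hsurv : ∀ t, t₀ ≤ t →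
      (P {ω | t < τ ω}).toReal = ∑' k, C k * Real.exp (-α k * t))
    (θ : ℝ) (hθ : θ < α 0) :
    Integrable (fun ω => Real.exp (θ * τ ω)) P :=
  light_tail_of_exponential_series_survival_general τ hτmeas hτnn α C hmono t₀ hsum hsurv θ hθ
end
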